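/- arXiv:2210.00466 — 4 statements merged into one kernel-verified Lean document; each statement's English description precedes it below -/
import Mathlib

section
/- Let $A = \mathbb{C}[\partial]a$ be a free $\mathbb{C}[\partial]$-module of rank one with $\lambda$-product $a_\lambda a = (\partial + \lambda + c)a$ for a fixed $c \in \mathbb{C}$ (extended by conformal sesquilinearity). Then $A$ is a left-symmetric conformal algebra. -/
/- Encoding conventions.
A `ℂ[∂]`-module is encoded as a complex vector space `A` together with an
endomorphism `D : Module.End ℂ A` (the action of `∂`).
A polynomial `Σ cₙ λⁿ ∈ A[λ]` is encoded by its coefficient family `ℕ →₀ A`,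
and `ev l p` is its evaluation at `λ = l`.  Since `ℂ` is infinite, a polynomial
identity in the formal variables `λ, μ, …` is equivalent to the corresponding
family of identities for all complex values of the variables, which is how all
axioms are stated below.
A `λ`-product `a ⊗ b ↦ a_λ b ∈ A[λ]` is encoded as `mul : A → A → (ℕ →₀ A)`
(the coefficients of `a_λ b`), its evaluation at `λ = l` being `ev l (mul a b)`.
`substNeg D p` is the result of substituting the variable of `p` by `-∂-λ`:
it is again a polynomial in `λ` with coefficients `ℕ →₀ A`, so that
`b_{-∂-λ} a` is encoded as `substNeg D (mul b a)` (as a polynomial in `λ`). -/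

namespace LSCpaper

open Finsupp

variable {A M V : Type*} [AddCommGroup A] [Module ℂ A] [AddCommGroup M] [Module ℂ M]
  [AddCommGroup V] [Module ℂ V]

/-- Evaluation of a polynomial with coefficients in `V` at a complex number. -/
noncomputable def ev (l : ℂ) (p : ℕ →₀ V) : V := p.sum fun n c => l ^ n • c

/-- Substitution of `-∂ - λ` for the variable of `p`; the result is the
coefficient family (in `λ`) of the resulting polynomial. -/
noncomputable def substNeg (D : Module.End ℂ A) (p : ℕ →₀ A) : ℕ →₀ A :=
  p.sum fun i c => ∑ k ∈ Finset.range (i + 1),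
    Finsupp.single k ((((-1 : ℂ) ^ k * (i.choose k : ℂ))) • ((-D) ^ (i - k)) c)

/-- `ℂ`-bilinearity of a `λ`-product. -/
def Bilin (f : A → M → ℕ →₀ V) : Prop :=
  (∀ a a' b, f (a + a') b = f a b + f a' b) ∧
  (∀ (r : ℂ) (a : A) (b : M), f (r • a) b = r • f a b) ∧
  (∀ a b b', f a (b + b') = f a b + f a b') ∧
  (∀ (r : ℂ) (a : A) (b : M), f a (r • b) = r • f a b)

/-- `A` with `∂`-action `D` and `λ`-product `mul` is a left-symmetric conformal
algebra. -/
structure IsLSC (D : Module.End ℂ A) (mul : A → A → ℕ →₀ A) : Prop where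
  bilin : Bilin mul
  sesq1 : ∀ (l : ℂ) (a b : A), ev l (mul (D a) b) = (-l) • ev l (mul a b)
  sesq2 : ∀ (l : ℂ) (a b : A), ev l (mul a (D b)) = D (ev l (mul a b)) + l • ev l (mul a b)
  lsym : ∀ (l m : ℂ) (a b c : A),
    ev (l + m) (mul (ev l (mul a b)) c) - ev l (mul a (ev m (mul b c))) =
      ev (l + m) (mul (ev m (mul b a)) c) - ev m (mul b (ev l (mul a c)))

/-- `A` with `∂`-action `D` and `λ`-bracket `br` is a Lie conformal algebra. -/
structure IsLieConf (D : Module.End ℂ A) (br : A → A → ℕ →₀ A) : Prop where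
  bilin : Bilin br
  sesq1 : ∀ (l : ℂ) (a b : A), ev l (br (D a) b) = (-l) • ev l (br a b)
  sesq2 : ∀ (l : ℂ) (a b : A), ev l (br a (D b)) = D (ev l (br a b)) + l • ev l (br a b)
  skew : ∀ (l : ℂ) (a b : A), ev l (br a b) = - ev l (substNeg D (br b a))
  jacobi : ∀ (l m : ℂ) (a b c : A),
    ev l (br a (ev m (br b c))) =
      ev (l + m) (br (ev l (br a b)) c) + ev m (br b (ev l (br a c)))

/-- The evaluated bracket `[a_λ b] = a_λ b - b_{-∂-λ} a` of the sub-adjacent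
Lie conformal algebra. -/
noncomputable def brEv (D : Module.End ℂ A) (mul : A → A → ℕ →₀ A) (l : ℂ) (a b : A) : A :=
  ev l (mul a b) - ev l (substNeg D (mul b a))

end LSCpaper

namespace LSCpaper

open Polynomial

/-! Identify `ℂ[∂]a` with `ℂ[∂]`. Sesquilinearity forces
`f(∂)a _λ g(∂)a = f(-λ) g(∂+λ) (∂+λ+c) a`, and for this product the associator
`(a_λ b)_{λ+μ} d - a_λ (b_μ d)` equals `-a(-λ) b(-μ) (∂+λ+μ) (∂+λ+μ+c) d(∂+λ+μ)`,
which is symmetric under `(a, λ) ↔ (b, μ)`. -/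

lemma eval_aeval {R A : Type*} [CommSemiring R] [CommSemiring A] [Algebra R A]
    (x : A[X]) (a : A) (p : R[X]) : (aeval x p).eval a = aeval (x.eval a) p :=
  (aeval_algHom_apply ((aeval a).restrictScalars R) x p).symm

lemma ev_toFinsupp_coeff {R : Type*} [Ring R] [Algebra ℂ R] (l : ℂ) (q : R[X]) :
    ev l q.toFinsupp.coeff = q.eval (algebraMap ℂ R l) := by
  rw [ev, eval_eq_sum, Polynomial.sum, Finsupp.sum]
  refine Finset.sum_congr rfl fun n _ => ?_
  rw [Algebra.smul_def, ← map_pow, ← Algebra.commutes]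
  rfl

/-- The coefficients in `λ` of `f(-λ) g(∂+λ) (∂+λ+c)`, computed in `ℂ[∂][λ]`, where the outer
variable is `λ` and `C X` is `∂`. -/
noncomputable def lambdaMul (c : ℂ) (f g : ℂ[X]) : ℕ →₀ ℂ[X] :=
  (aeval (-X : ℂ[X][X]) f * aeval (C X + X : ℂ[X][X]) g *
    (C X + X + C (C c))).toFinsupp.coeff

lemma ev_lambdaMul (c l : ℂ) (f g : ℂ[X]) :
    ev l (lambdaMul c f g) = C (f.eval (-l)) * g.comp (X + C l) * (X + C l + C c) := by
  simp only [lambdaMul, ev_toFinsupp_coeff, algebraMap_eq, eval_mul, eval_add, eval_C, eval_X,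
    eval_aeval, eval_neg, comp_eq_aeval]
  rw [← map_neg, ← algebraMap_eq, aeval_algebraMap_apply_eq_algebraMap_eval]

lemma bilin_lambdaMul (c : ℂ) : Bilin (lambdaMul c) := by
  refine ⟨fun a a' b => ?_, fun r a b => ?_, fun a b b' => ?_, fun r a b => ?_⟩ <;>
    simp only [lambdaMul, map_add, map_smul, add_mul, mul_add, smul_mul_assoc,
      mul_smul_comm, toFinsupp_add, toFinsupp_smul, AddMonoidAlgebra.coeff_add,
      AddMonoidAlgebra.coeff_smul, smul_add] <;>
    abel

lemma associator_lambdaMul (c l m : ℂ) (a b d : ℂ[X]) :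
    ev (l + m) (lambdaMul c (ev l (lambdaMul c a b)) d) -
        ev l (lambdaMul c a (ev m (lambdaMul c b d))) =
      -(C (a.eval (-l) * b.eval (-m)) * (X + C (l + m)) * (X + C (l + m) + C c) *
        d.comp (X + C (l + m))) := by
  have hneg : -(l + m) + l = -m := by ring
  simp only [ev_lambdaMul, eval_mul, eval_add, eval_comp, eval_C, eval_X, mul_comp, add_comp,
    C_comp, X_comp, comp_assoc, hneg, map_add, map_mul, map_neg, add_assoc]
  ring

/-- `A = ℂ[∂]a`, free of rank one (encoded as `ℂ[∂]` itself,
with `a = 1` and `∂` acting by multiplication by the variable), carries a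
left-symmetric conformal algebra structure whose `λ`-product is determined by
`a_λ a = (∂ + λ + c) a` (and extended by conformal sesquilinearity, which is
part of `IsLSC`). -/
theorem rank_one_example (c : ℂ) :
    ∃ mul : Polynomial ℂ → Polynomial ℂ → (ℕ →₀ Polynomial ℂ),
      IsLSC (LinearMap.mulLeft ℂ (Polynomial.X : Polynomial ℂ)) mul ∧
      ∀ l : ℂ, ev l (mul 1 1) = Polynomial.X + Polynomial.C (l + c) := by
  refine ⟨lambdaMul c,
    ⟨bilin_lambdaMul c, fun l a b => ?_, fun l a b => ?_, fun l m a b d => ?_⟩, fun l => ?_⟩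
  · simp only [LinearMap.mulLeft_apply, ev_lambdaMul, eval_mul, eval_X, map_mul, map_neg,
      smul_eq_C_mul]
    ring
  · simp only [LinearMap.mulLeft_apply, ev_lambdaMul, mul_comp, X_comp, smul_eq_C_mul]
    ring
  · rw [associator_lambdaMul, add_comm l m, associator_lambdaMul, mul_comm (a.eval _)]
  · simp only [ev_lambdaMul, eval_one, one_comp, map_one, one_mul, map_add]
    ring

end LSCpaper
end

section
/- Let $A$ be a left-symmetric conformal algebra, $M$ a $\mathbb{C}[\partial]$-module, and $l, r: A \to \mathrm{Cend}(M)$ two $\mathbb{C}[\partial]$-module homomorphisms. Then $(M, l, r)$ is a conformal module over $A$ if and only if the $\mathbb{C}[\partial]$-module $A\oplus M$ is a left-symmetric conformal algebra with $\lambda$-product $(a+u)_\lambda(b+v) = a_\lambda b + l(a)_\lambda v + r(b)_{-\partial-\lambda} u$. -/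
namespace LSCpaper

variable {A M : Type*} [AddCommGroup A] [Module ℂ A] [AddCommGroup M] [Module ℂ M]

/-- `(M, la, ra)` is a conformal module over the left-symmetric conformal
algebra `(A, D, mul)`.  Here `la a v` encodes `a_λ v ∈ M[λ]` and `ra v a`
encodes `v_λ a ∈ M[λ]`. -/
structure IsLSCMod (D : Module.End ℂ A) (Dm : Module.End ℂ M)
    (mul : A → A → ℕ →₀ A) (la : A → M → ℕ →₀ M) (ra : M → A → ℕ →₀ M) : Prop where
  lbilin : Bilin la
  rbilin : Bilin ra
  lsesq1 : ∀ (l : ℂ) (a : A) (v : M), ev l (la (D a) v) = (-l) • ev l (la a v)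
  lsesq2 : ∀ (l : ℂ) (a : A) (v : M),
    ev l (la a (Dm v)) = Dm (ev l (la a v)) + l • ev l (la a v)
  rsesq1 : ∀ (l : ℂ) (v : M) (a : A), ev l (ra (Dm v) a) = (-l) • ev l (ra v a)
  rsesq2 : ∀ (l : ℂ) (v : M) (a : A),
    ev l (ra v (D a)) = Dm (ev l (ra v a)) + l • ev l (ra v a)
  lcomp : ∀ (l m : ℂ) (a b : A) (v : M),
    ev (l + m) (la (ev l (mul a b)) v) - ev l (la a (ev m (la b v))) =
      ev (l + m) (la (ev m (mul b a)) v) - ev m (la b (ev l (la a v)))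
  rcomp : ∀ (l m : ℂ) (a : A) (v : M) (b : A),
    ev (l + m) (ra (ev l (la a v)) b) - ev l (la a (ev m (ra v b))) =
      ev (l + m) (ra (ev m (ra v a)) b) - ev m (ra v (ev l (mul a b)))

/-- Combine an `A`-valued and an `M`-valued polynomial into an
`(A × M)`-valued polynomial. -/
noncomputable def pairF (p : ℕ →₀ A) (q : ℕ →₀ M) : ℕ →₀ (A × M) :=
  Finsupp.mapRange (fun x => (x, (0 : M))) rfl p +
    Finsupp.mapRange (fun y => ((0 : A), y)) rfl q

end LSCpaper

/-! Every identity of a left-symmetric conformal algebra on `A ⊕ M` has an `A`-component, which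
is the identity in `A`, and an `M`-component, which is additive in the `M`-parts `u, v, w` of the
arguments.  Keeping one `M`-part gives the module axioms: `(a, 0) (b, 0) (0, w)` yields the
`l`-identity and `(a, 0) (0, v) (c, 0)` the mixed `l`/`r`-identity.  Conversely, the general
`M`-component is the sum of the `l`-identity for `w`, the mixed identity for `v`, and the mixed
identity for `u` with `a ↔ b` and `λ ↔ μ` exchanged. -/

namespace LSCpaper

section Polynomials

variable {A M V : Type*} [AddCommGroup A] [AddCommGroup M] [AddCommGroup V]

@[simp]
lemma pairF_apply (p : ℕ →₀ A) (q : ℕ →₀ M) (n : ℕ) : pairF p q n = (p n, q n) := by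
  simp [pairF]

lemma pairF_add (p p' : ℕ →₀ A) (q q' : ℕ →₀ M) :
    pairF (p + p') (q + q') = pairF p q + pairF p' q' := by
  ext n <;> simp

variable [Module ℂ A] [Module ℂ M] [Module ℂ V]

@[simp]
lemma ev_zero (l : ℂ) : ev l (0 : ℕ →₀ V) = 0 := Finsupp.sum_zero_index

@[simp]
lemma ev_add (l : ℂ) (p q : ℕ →₀ V) : ev l (p + q) = ev l p + ev l q :=
  Finsupp.sum_add_index' (fun _ => smul_zero _) fun _ _ _ => smul_add _ _ _

lemma pairF_smul (r : ℂ) (p : ℕ →₀ A) (q : ℕ →₀ M) :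
    pairF (r • p) (r • q) = r • pairF p q := by
  ext n <;> simp

@[simp]
lemma ev_pairF (l : ℂ) (p : ℕ →₀ A) (q : ℕ →₀ M) :
    ev l (pairF p q) = (ev l p, ev l q) := by
  rw [pairF, ev_add, ev, ev, Finsupp.sum_mapRange_index (by simp),
    Finsupp.sum_mapRange_index (by simp)]
  ext <;> simp [ev, Finsupp.sum, Prod.fst_sum, Prod.snd_sum]

lemma Bilin.zero_left {f : A → M → ℕ →₀ V} (hf : Bilin f) (b : M) : f 0 b = 0 := by
  simpa using hf.2.1 0 0 b

lemma Bilin.zero_right {f : A → M → ℕ →₀ V} (hf : Bilin f) (a : A) : f a 0 = 0 := by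
  simpa using hf.2.2.2 0 a 0

end Polynomials

section Semidirect

variable {A M : Type*} [AddCommGroup A] [Module ℂ A] [AddCommGroup M] [Module ℂ M]
  {D : Module.End ℂ A} {Dm : Module.End ℂ M} {mul : A → A → ℕ →₀ A}
  {la : A → M → ℕ →₀ M} {ra : M → A → ℕ →₀ M}

noncomputable def semidirectMul (mul : A → A → ℕ →₀ A) (la : A → M → ℕ →₀ M)
    (ra : M → A → ℕ →₀ M) (x y : A × M) : ℕ →₀ (A × M) :=
  pairF (mul x.1 y.1) (la x.1 y.2 + ra x.2 y.1)

@[simp]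
lemma ev_semidirectMul (l : ℂ) (x y : A × M) :
    ev l (semidirectMul mul la ra x y) =
      (ev l (mul x.1 y.1), ev l (la x.1 y.2) + ev l (ra x.2 y.1)) := by
  simp [semidirectMul]

lemma bilin_semidirectMul (hmul : Bilin mul) (hla : Bilin la) (hra : Bilin ra) :
    Bilin (semidirectMul mul la ra) := by
  refine ⟨fun x x' y => ?_, fun r x y => ?_, fun x y y' => ?_, fun r x y => ?_⟩
  · simp only [semidirectMul, Prod.fst_add, Prod.snd_add, hmul.1, hla.1, hra.1, ← pairF_add]
    abel_nf
  · simp only [semidirectMul, Prod.smul_fst, Prod.smul_snd, hmul.2.1, hla.2.1, hra.2.1,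
      ← smul_add, pairF_smul]
  · simp only [semidirectMul, Prod.fst_add, Prod.snd_add, hmul.2.2.1, hla.2.2.1, hra.2.2.1,
      ← pairF_add]
    abel_nf
  · simp only [semidirectMul, Prod.smul_fst, Prod.smul_snd, hmul.2.2.2, hla.2.2.2, hra.2.2.2,
      ← smul_add, pairF_smul]

lemma IsLSCMod.isLSC_semidirectMul (hA : IsLSC D mul) (h : IsLSCMod D Dm mul la ra) :
    IsLSC (LinearMap.prodMap D Dm) (semidirectMul mul la ra) where
  bilin := bilin_semidirectMul hA.bilin h.lbilin h.rbilin
  sesq1 l x y := by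
    ext <;> simp [hA.sesq1, h.lsesq1, h.rsesq1, smul_add]
    abel
  sesq2 l x y := by
    ext <;> simp [hA.sesq2, h.lsesq2, h.rsesq2, smul_add]
    abel
  lsym l m x y z := by
    obtain ⟨a, u⟩ := x
    obtain ⟨b, v⟩ := y
    obtain ⟨c, w⟩ := z
    have hmixed_u := h.rcomp m l b u c
    rw [add_comm m l] at hmixed_u
    ext
    · simpa using hA.lsym l m a b c
    · simp only [ev_semidirectMul, Prod.snd_sub, h.lbilin.2.2.1, h.rbilin.1, ev_add]
      linear_combination (norm := abel) h.lcomp l m a b w + h.rcomp l m a v c - hmixed_u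

lemma IsLSC.lcomp_of_semidirectMul (hmul : Bilin mul) (hla : Bilin la) (hra : Bilin ra)
    (h : IsLSC (LinearMap.prodMap D Dm) (semidirectMul mul la ra)) (l m : ℂ) (a b : A) (v : M) :
    ev (l + m) (la (ev l (mul a b)) v) - ev l (la a (ev m (la b v))) =
      ev (l + m) (la (ev m (mul b a)) v) - ev m (la b (ev l (la a v))) := by
  simpa [hmul.zero_left, hmul.zero_right, hla.zero_left, hla.zero_right, hra.zero_left,
    hra.zero_right] using congrArg Prod.snd (h.lsym l m (a, 0) (b, 0) (0, v))

lemma IsLSC.rcomp_of_semidirectMul (hmul : Bilin mul) (hla : Bilin la) (hra : Bilin ra)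
    (h : IsLSC (LinearMap.prodMap D Dm) (semidirectMul mul la ra)) (l m : ℂ) (a : A) (v : M)
    (b : A) :
    ev (l + m) (ra (ev l (la a v)) b) - ev l (la a (ev m (ra v b))) =
      ev (l + m) (ra (ev m (ra v a)) b) - ev m (ra v (ev l (mul a b))) := by
  simpa [hmul.zero_left, hmul.zero_right, hla.zero_left, hla.zero_right, hra.zero_left,
    hra.zero_right] using congrArg Prod.snd (h.lsym l m (a, 0) (0, v) (b, 0))

end Semidirect

/-- Let `A` be a left-symmetric conformal algebra, `M` a
`ℂ[∂]`-module, and `l, r` two `ℂ[∂]`-module homomorphisms `A → Cend(M)`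
(encoded by the bilinear, conformally sesquilinear actions
`la a v = l(a)_λ v` and `ra v a = r(a)_{-∂-λ} v = v_λ a`).  Then `(M, l, r)`
is a conformal module over `A` if and only if `A ⊕ M` is a left-symmetric
conformal algebra for `(a+u)_λ(b+v) = a_λ b + l(a)_λ v + r(b)_{-∂-λ} u`. -/
theorem module_iff_semidirect {A M : Type*} [AddCommGroup A] [Module ℂ A]
    [AddCommGroup M] [Module ℂ M]
    (D : Module.End ℂ A) (Dm : Module.End ℂ M) (mul : A → A → ℕ →₀ A)
    (la : A → M → ℕ →₀ M) (ra : M → A → ℕ →₀ M)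
    (hA : IsLSC D mul) (hbl : Bilin la) (hbr : Bilin ra)
    (hl1 : ∀ (l : ℂ) (a : A) (v : M), ev l (la (D a) v) = (-l) • ev l (la a v))
    (hl2 : ∀ (l : ℂ) (a : A) (v : M),
      ev l (la a (Dm v)) = Dm (ev l (la a v)) + l • ev l (la a v))
    (hr1 : ∀ (l : ℂ) (v : M) (a : A), ev l (ra (Dm v) a) = (-l) • ev l (ra v a))
    (hr2 : ∀ (l : ℂ) (v : M) (a : A),
      ev l (ra v (D a)) = Dm (ev l (ra v a)) + l • ev l (ra v a)) :
    IsLSCMod D Dm mul la ra ↔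
      IsLSC (LinearMap.prodMap D Dm)
        (fun x y => pairF (mul x.1 y.1) (la x.1 y.2 + ra x.2 y.1)) :=
  ⟨fun h => h.isLSC_semidirectMul hA, fun h =>
    ⟨hbl, hbr, hl1, hl2, hr1, hr2, h.lcomp_of_semidirectMul hA.bilin hbl hbr,
      h.rcomp_of_semidirectMul hA.bilin hbl hbr⟩⟩

end LSCpaper
end

section
/- Let $A$ be a left-symmetric conformal algebra and let $\theta_t, \theta'_t$ be two equivalent formal 1-parameter deformations of $A$. Then $\theta'_1 - \theta_1 = \delta\phi_1$ for the linear term $\phi_1$ of the equivalence; in particular $\theta_1$ and $\theta'_1$ lie in the same cohomology class in $H^2(A,A)$. -/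
namespace LSCpaper

variable {A : Type*} [AddCommGroup A] [Module ℂ A]

/-- `θ` (with `θ 0` the original product) is a formal `1`-parameter
deformation of the left-symmetric conformal algebra `(A, D, θ 0)`:
each `θ i` is a `2`-cochain and the left-symmetric identity holds in each
degree of `t`. -/
structure IsFormalDef (D : Module.End ℂ A) (θ : ℕ → A → A → ℕ →₀ A) : Prop where
  base : IsLSC D (θ 0)
  bilin : ∀ i, Bilin (θ i)
  sesq1 : ∀ i (l : ℂ) (a b : A), ev l (θ i (D a) b) = (-l) • ev l (θ i a b)
  sesq2 : ∀ i (l : ℂ) (a b : A),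
    ev l (θ i a (D b)) = D (ev l (θ i a b)) + l • ev l (θ i a b)
  deform : ∀ (n : ℕ) (l m : ℂ) (a b c : A),
    (∑ i ∈ Finset.range (n + 1),
        (ev (l + m) (θ i (ev l (θ (n - i) a b)) c)
          - ev l (θ i a (ev m (θ (n - i) b c))))) =
      (∑ i ∈ Finset.range (n + 1),
        (ev (l + m) (θ i (ev m (θ (n - i) b a)) c)
          - ev m (θ i b (ev l (θ (n - i) a c)))))

end LSCpaper

namespace LSCpaper

theorem equivalent_deformations_cohomologous_general {A : Type*} [AddCommGroup A] [Module ℂ A]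
    (θ θ' : ℕ → A → A → ℕ →₀ A)
    (hsame : θ' 0 = θ 0)
    (φ : ℕ → A →ₗ[ℂ] A)
    (hφ0 : φ 0 = LinearMap.id)
    (hequiv : ∀ (n : ℕ) (l : ℂ) (a b : A),
      (∑ i ∈ Finset.range (n + 1), φ i (ev l (θ' (n - i) a b))) =
        ∑ i ∈ Finset.range (n + 1), ∑ j ∈ Finset.range (n + 1 - i),
          ev l (θ i (φ j a) (φ (n - i - j) b))) :
    ∀ (l : ℂ) (a b : A),
      ev l (θ' 1 a b) - ev l (θ 1 a b) =
        ev l (θ 0 (φ 1 a) b) + ev l (θ 0 a (φ 1 b)) - φ 1 (ev l (θ 0 a b)) := by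
  intro l a b
  have degree_one : ev l (θ' 1 a b) + φ 1 (ev l (θ 0 a b)) =
      ev l (θ 0 a (φ 1 b)) + ev l (θ 0 (φ 1 a) b) + ev l (θ 1 a b) := by
    simpa only [Finset.sum_range_succ, Finset.range_one, Finset.sum_singleton, hφ0, hsame,
      LinearMap.id_coe, id_eq, Nat.reduceAdd, tsub_zero, tsub_self, Nat.add_one_sub_one,
      zero_tsub] using hequiv 1 l a b
  linear_combination (norm := abel) degree_one

/-- Let `θ_t` and `θ'_t` be two equivalent formal
`1`-parameter deformations of a left-symmetric conformal algebra `A`, via a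
formal isomorphism `φ_t = Σ φᵢ tⁱ` with `φ₀ = id`.  Then
`θ'₁ - θ₁ = δ φ₁`, so `θ₁` and `θ'₁` lie in the same cohomology class in
`H²(A, A)`. -/
theorem equivalent_deformations_cohomologous {A : Type*} [AddCommGroup A] [Module ℂ A]
    (D : Module.End ℂ A) (θ θ' : ℕ → A → A → ℕ →₀ A)
    (hθ : IsFormalDef D θ) (hθ' : IsFormalDef D θ')
    (hsame : θ' 0 = θ 0)
    (φ : ℕ → A →ₗ[ℂ] A)
    (hφD : ∀ i a, φ i (D a) = D (φ i a))
    (hφ0 : φ 0 = LinearMap.id)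
    (hequiv : ∀ (n : ℕ) (l : ℂ) (a b : A),
      (∑ i ∈ Finset.range (n + 1), φ i (ev l (θ' (n - i) a b))) =
        ∑ i ∈ Finset.range (n + 1), ∑ j ∈ Finset.range (n + 1 - i),
          ev l (θ i (φ j a) (φ (n - i - j) b))) :
    ∀ (l : ℂ) (a b : A),
      ev l (θ' 1 a b) - ev l (θ 1 a b) =
        ev l (θ 0 (φ 1 a) b) + ev l (θ 0 a (φ 1 b)) - φ 1 (ev l (θ 0 a b)) :=
  equivalent_deformations_cohomologous_general θ θ' hsame φ hφ0 hequiv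

end LSCpaper
end

section
/- Let $A$ be a left-symmetric conformal algebra and $\theta_t$ a formal 1-parameter deformation of $A$. Then $\Theta_t$ defined by $(\Theta_t)_\lambda(a,b) = (\theta_t)_\lambda(a,b) - (\theta_t)_{-\partial-\lambda}(b,a)$ is a formal 1-parameter deformation of the sub-adjacent Lie conformal algebra $g(A)$. -/
namespace LSCpaper

variable {A : Type*} [AddCommGroup A] [Module ℂ A]

/-- `Θ` (with `Θ 0` the original bracket) is a formal `1`-parameter
deformation of the Lie conformal algebra `(A, D, Θ 0)`: each `Θ i` is a skew
`2`-cochain and the Jacobi identity holds in each degree of `t`. -/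
structure IsLieFormalDef (D : Module.End ℂ A) (Θ : ℕ → A → A → ℕ →₀ A) : Prop where
  base : IsLieConf D (Θ 0)
  bilin : ∀ i, Bilin (Θ i)
  sesq1 : ∀ i (l : ℂ) (a b : A), ev l (Θ i (D a) b) = (-l) • ev l (Θ i a b)
  sesq2 : ∀ i (l : ℂ) (a b : A),
    ev l (Θ i a (D b)) = D (ev l (Θ i a b)) + l • ev l (Θ i a b)
  skew : ∀ i (l : ℂ) (a b : A), ev l (Θ i a b) = - ev l (substNeg D (Θ i b a))
  deform : ∀ (n : ℕ) (l m : ℂ) (a b c : A),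
    (∑ i ∈ Finset.range (n + 1), ev l (Θ i a (ev m (Θ (n - i) b c)))) =
      ∑ i ∈ Finset.range (n + 1),
        (ev (l + m) (Θ i (ev l (Θ (n - i) a b)) c)
          + ev m (Θ i b (ev l (Θ (n - i) a c))))

/-! Expanding `Θ`, each of the twelve terms of the degree-`n` Jacobi identity of `Θ_t` is a nested
product `θᵢ(θⱼ(·, ·), ·)` or `θᵢ(·, θⱼ(·, ·))` with `i + j = n`, evaluated at two of the operators
`l`, `m`, `-∂-l`, `-∂-m`, `-∂-l-m`: sesquilinearity moves each substitution `-∂-λ` of an inner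
product to the outside. The degree-`n` left-symmetry identity of `θ_t` is an identity of
polynomials in `μ` with coefficients in `A`, so it stays true when `μ` is an operator, and its
instances at `(λ, μ) = (l, m)`, `(l, -∂-l-m)`, `(m, -∂-l-m)` add up to the Jacobi identity. -/

section OperatorEvaluation

lemma commute_smul_one (D : Module.End ℂ A) (z : ℂ) : Commute D (z • 1) :=
  (Commute.one_right D).smul_right z

lemma commute_neg_smul_one_sub (D : Module.End ℂ A) (z : ℂ) : Commute D (-(z • 1) - D) :=
  (commute_smul_one D z).neg_right.sub_right (Commute.refl D)

noncomputable def opEv (T : Module.End ℂ A) : (ℕ →₀ A) →ₗ[ℂ] A :=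
  Finsupp.lsum ℂ fun n => T ^ n

lemma opEv_apply (T : Module.End ℂ A) (p : ℕ →₀ A) :
    opEv T p = p.sum fun n c => (T ^ n) c :=
  Finsupp.lsum_apply ℂ _ p

@[simp] lemma opEv_single (T : Module.End ℂ A) (n : ℕ) (c : A) :
    opEv T (Finsupp.single n c) = (T ^ n) c := by
  simp [opEv]

lemma smul_one_pow_apply (z : ℂ) (n : ℕ) (c : A) :
    ((z • 1 : Module.End ℂ A) ^ n) c = z ^ n • c := by
  simp [smul_pow]

lemma ev_eq_opEv (l : ℂ) (p : ℕ →₀ A) : ev l p = opEv (l • 1) p := by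
  simp only [ev, opEv_apply, smul_one_pow_apply]

lemma ev_sub (l : ℂ) (p q : ℕ →₀ A) : ev l (p - q) = ev l p - ev l q := by
  simp only [ev_eq_opEv, map_sub]

lemma eq_zero_of_forall_ev_eq_zero {p : ℕ →₀ A} (h : ∀ l : ℂ, ev l p = 0) : p = 0 := by
  ext n
  refine (Module.forall_dual_apply_eq_zero_iff ℂ (p n)).mp fun φ => ?_
  let P : Polynomial ℂ := ∑ k ∈ p.support, Polynomial.monomial k (φ (p k))
  have hP : P = 0 := Polynomial.funext fun l => by
    simpa [P, ev, Finsupp.sum, Polynomial.eval_finsetSum, mul_comm] using congrArg φ (h l)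
  by_cases hn : p n = 0
  · simp [hn]
  · simpa [P, Polynomial.finsetSum_coeff, Polynomial.coeff_monomial, hn] using
      congrArg (Polynomial.coeff · n) hP

lemma eq_of_forall_ev_eq {p q : ℕ →₀ A} (h : ∀ l : ℂ, ev l p = ev l q) : p = q :=
  sub_eq_zero.mp <| eq_zero_of_forall_ev_eq_zero fun l => by rw [ev_sub, h, sub_self]

noncomputable def mulVar : (ℕ →₀ A) →ₗ[ℂ] (ℕ →₀ A) := Finsupp.lmapDomain A ℂ Nat.succ

lemma opEv_mulVar (T : Module.End ℂ A) (p : ℕ →₀ A) : opEv T (mulVar p) = T (opEv T p) := by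
  induction p using Finsupp.induction_linear with
  | zero => simp
  | add p q hp hq => simp only [map_add, hp, hq]
  | single n c => simp [mulVar, pow_succ']

lemma opEv_mapRange {D T : Module.End ℂ A} (hT : Commute D T) (p : ℕ →₀ A) :
    opEv T (Finsupp.mapRange.linearMap D p) = D (opEv T p) := by
  induction p using Finsupp.induction_linear with
  | zero => simp
  | add p q hp hq => simp only [map_add, hp, hq]
  | single n c => simp [← Module.End.mul_apply, (hT.pow_right n).eq]

end OperatorEvaluation

section SubstNeg

variable (D : Module.End ℂ A)

lemma substNeg_add (p q : ℕ →₀ A) : substNeg D (p + q) = substNeg D p + substNeg D q := by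
  refine Finsupp.sum_add_index' (fun i => by simp) fun i c c' => ?_
  simp [smul_add, Finsupp.single_add, Finset.sum_add_distrib]

lemma substNeg_smul (r : ℂ) (p : ℕ →₀ A) : substNeg D (r • p) = r • substNeg D p := by
  rw [substNeg, Finsupp.sum_smul_index' fun i => by simp, substNeg, Finsupp.smul_sum]
  refine Finsupp.sum_congr fun i _ => ?_
  simp only [Finset.smul_sum, map_smul, Finsupp.smul_single, smul_smul, mul_comm r]

lemma substNeg_sub (p q : ℕ →₀ A) : substNeg D (p - q) = substNeg D p - substNeg D q :=
  eq_sub_of_add_eq <| by rw [← substNeg_add, sub_add_cancel]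

variable {D}

lemma opEv_substNeg {T : Module.End ℂ A} (hT : Commute D T) (p : ℕ →₀ A) :
    opEv T (substNeg D p) = opEv (-T - D) p := by
  rw [substNeg, map_finsuppSum, opEv_apply]
  refine Finsupp.sum_congr fun i _ => ?_
  rw [sub_eq_add_neg, (hT.symm.neg_left.neg_right).add_pow, LinearMap.sum_apply, map_sum]
  refine Finset.sum_congr rfl fun k _ => ?_
  have hneg : (-T) ^ k = (-1 : ℂ) ^ k • T ^ k := by rw [← smul_pow, neg_one_smul]
  simp only [opEv_single, hneg, Module.End.mul_apply, Module.End.natCast_apply,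
    LinearMap.smul_apply, map_smul, ← Nat.cast_smul_eq_nsmul ℂ, mul_smul]
  exact smul_comm _ _ _

lemma ev_substNeg (l : ℂ) (p : ℕ →₀ A) : ev l (substNeg D p) = opEv (-(l • 1) - D) p := by
  rw [ev_eq_opEv, opEv_substNeg (commute_smul_one D l)]

lemma ev_substNeg_substNeg (l : ℂ) (p : ℕ →₀ A) :
    ev l (substNeg D (substNeg D p)) = ev l p := by
  rw [ev_substNeg, opEv_substNeg (commute_neg_smul_one_sub D l), ev_eq_opEv, neg_sub,
    sub_neg_eq_add, add_sub_cancel_left]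

end SubstNeg

section OperatorPolynomials

/-- The maps `T ↦ Σₙ Tⁿ cₙ` of an operator variable `T`. -/
noncomputable def opPolyFun : Submodule ℂ (Module.End ℂ A → A) :=
  LinearMap.range (LinearMap.pi fun T => opEv T)

lemma eq_zero_of_mem_opPolyFun {Φ : Module.End ℂ A → A} (hΦ : Φ ∈ opPolyFun)
    (h : ∀ y : ℂ, Φ (y • 1) = 0) (T : Module.End ℂ A) : Φ T = 0 := by
  obtain ⟨p, rfl⟩ := hΦ
  have hp : p = 0 := eq_zero_of_forall_ev_eq_zero fun y => (ev_eq_opEv y p).trans (h y)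
  simp [hp]

lemma opEv_mem_opPolyFun (p : ℕ →₀ A) : (fun T => opEv T p) ∈ opPolyFun := ⟨p, rfl⟩

lemma const_mem_opPolyFun (c : A) :
    (fun _ => c) ∈ (opPolyFun : Submodule ℂ (Module.End ℂ A → A)) :=
  ⟨Finsupp.single 0 c, funext fun T => opEv_single T 0 c⟩

lemma apply_mem_opPolyFun {Φ : Module.End ℂ A → A} (hΦ : Φ ∈ opPolyFun) :
    (fun T => T (Φ T)) ∈ opPolyFun := by
  obtain ⟨p, rfl⟩ := hΦ
  exact ⟨mulVar p, funext fun T => opEv_mulVar T p⟩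

lemma pow_apply_mem_opPolyFun {Φ : Module.End ℂ A → A} (hΦ : Φ ∈ opPolyFun) (r : ℕ) :
    (fun T => (T ^ r) (Φ T)) ∈ opPolyFun := by
  induction r with
  | zero => simpa using hΦ
  | succ r ih => simpa only [pow_succ', Module.End.mul_apply] using apply_mem_opPolyFun ih

lemma sum_mem_opPolyFun {ι : Type*} (s : Finset ι) {Φ : ι → Module.End ℂ A → A}
    (hΦ : ∀ i ∈ s, Φ i ∈ opPolyFun) : (fun T => ∑ i ∈ s, Φ i T) ∈ opPolyFun := by
  simpa only [← Finset.sum_apply] using Submodule.sum_mem _ hΦ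

lemma finsuppSum_mem_opPolyFun (p : ℕ →₀ A) {Φ : ℕ → A → Module.End ℂ A → A}
    (hΦ : ∀ r c, Φ r c ∈ opPolyFun) : (fun T => p.sum fun r c => Φ r c T) ∈ opPolyFun :=
  sum_mem_opPolyFun _ fun r _ => hΦ r (p r)

lemma shift_mem_opPolyFun (x : ℂ) (p : ℕ →₀ A) : (fun T => opEv (x • 1 + T) p) ∈ opPolyFun := by
  simp only [opEv_apply]
  refine finsuppSum_mem_opPolyFun p fun n c => ?_
  induction n with
  | zero => simpa using const_mem_opPolyFun c
  | succ n ih =>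
    simp only [pow_succ', Module.End.mul_apply, LinearMap.add_apply, LinearMap.smul_apply,
      Module.End.one_apply]
    exact add_mem (Submodule.smul_mem _ x ih) (apply_mem_opPolyFun ih)

end OperatorPolynomials

section Bilinear

variable {M V : Type*} [AddCommGroup M] [Module ℂ M] [AddCommGroup V] [Module ℂ V]

noncomputable def Bilin.toLinearMap₂ {f : A → M → ℕ →₀ V} (hf : Bilin f) :
    A →ₗ[ℂ] M →ₗ[ℂ] ℕ →₀ V :=
  LinearMap.mk₂ ℂ f hf.1 hf.2.1 hf.2.2.1 hf.2.2.2

lemma Bilin.sub_left {f : A → M → ℕ →₀ V} (hf : Bilin f) (a a' : A) (b : M) :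
    f (a - a') b = f a b - f a' b :=
  map_sub (hf.toLinearMap₂.flip b) a a'

lemma Bilin.sub_right {f : A → M → ℕ →₀ V} (hf : Bilin f) (a : A) (b b' : M) :
    f a (b - b') = f a b - f a b' :=
  map_sub (hf.toLinearMap₂ a) b b'

lemma Bilin.finsuppSum_left {f : A → M → ℕ →₀ V} (hf : Bilin f) (p : ℕ →₀ A)
    (h : ℕ → A → A) (b : M) : f (p.sum h) b = p.sum fun r c => f (h r c) b :=
  map_finsuppSum (hf.toLinearMap₂.flip b) p h

lemma Bilin.finsuppSum_right {f : A → M → ℕ →₀ V} (hf : Bilin f) (a : A) (p : ℕ →₀ M)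
    (h : ℕ → M → M) : f a (p.sum h) = p.sum fun r c => f a (h r c) :=
  map_finsuppSum (hf.toLinearMap₂ a) p h

end Bilinear

section Sesquilinear

variable {D : Module.End ℂ A}

structure IsSesquilinear (D : Module.End ℂ A) (f : A → A → ℕ →₀ A) : Prop where
  bilin : Bilin f
  sesq1 : ∀ (l : ℂ) (a b : A), ev l (f (D a) b) = (-l) • ev l (f a b)
  sesq2 : ∀ (l : ℂ) (a b : A), ev l (f a (D b)) = D (ev l (f a b)) + l • ev l (f a b)

variable {f : A → A → ℕ →₀ A}

lemma IsSesquilinear.opEv_apply_left (hf : IsSesquilinear D f) (T : Module.End ℂ A) (a b : A) :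
    opEv T (f (D a) b) = -T (opEv T (f a b)) := by
  have h : f (D a) b = -mulVar (f a b) := eq_of_forall_ev_eq fun l => by
    simp [hf.sesq1, ev_eq_opEv, opEv_mulVar]
  rw [h, map_neg, opEv_mulVar]

lemma IsSesquilinear.opEv_apply_right (hf : IsSesquilinear D f) {T : Module.End ℂ A}
    (hT : Commute D T) (a b : A) :
    opEv T (f a (D b)) = D (opEv T (f a b)) + T (opEv T (f a b)) := by
  have h : f a (D b) = Finsupp.mapRange.linearMap D (f a b) + mulVar (f a b) :=
    eq_of_forall_ev_eq fun l => by
      rw [hf.sesq2, ev_eq_opEv, ev_eq_opEv, map_add, opEv_mapRange (commute_smul_one D l),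
        opEv_mulVar]
      simp
  rw [h, map_add, opEv_mapRange hT, opEv_mulVar]

lemma IsSesquilinear.opEv_pow_apply_left (hf : IsSesquilinear D f) (T : Module.End ℂ A)
    (z : ℂ) (r : ℕ) (q b : A) :
    opEv T (f (((-(z • 1) - D) ^ r) q) b) = ((T - z • 1) ^ r) (opEv T (f q b)) := by
  have h : Function.Semiconj (fun q => opEv T (f q b)) ⇑(-(z • 1) - D) ⇑(T - z • 1) := fun q => by
    simp only [LinearMap.sub_apply, LinearMap.smul_apply, Module.End.one_apply, ← neg_smul,
      hf.bilin.sub_left, hf.bilin.2.1, map_sub, map_smul, hf.opEv_apply_left]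
    module
  simpa only [Module.End.coe_pow] using h.iterate_right r q

lemma IsSesquilinear.opEv_pow_apply_right (hf : IsSesquilinear D f) {T : Module.End ℂ A}
    (hT : Commute D T) (z : ℂ) (r : ℕ) (a q : A) :
    opEv T (f a (((-(z • 1) - D) ^ r) q)) = ((-(z • 1) - D - T) ^ r) (opEv T (f a q)) := by
  have h : Function.Semiconj (fun q => opEv T (f a q)) ⇑(-(z • 1) - D)
      ⇑(-(z • 1) - D - T) := fun q => by
    simp only [LinearMap.sub_apply, LinearMap.smul_apply, Module.End.one_apply, ← neg_smul,
      hf.bilin.sub_right, hf.bilin.2.2.2, map_sub, map_smul, hf.opEv_apply_right hT]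
    module
  simpa only [Module.End.coe_pow] using h.iterate_right r q

end Sesquilinear

section Nested

variable {D : Module.End ℂ A}

/-- `nestedLeft f g V U x y w` is `f_μ(g_λ(x, y), w)` and `nestedRight f g V U x y w` is
`f_μ(x, g_λ(y, w))`, evaluated at `λ = V`, `μ = U` with the powers of `V` applied last. -/
noncomputable def nestedLeft (f g : A → A → ℕ →₀ A) (V U : Module.End ℂ A) (x y w : A) : A :=
  (g x y).sum fun r c => (V ^ r) (opEv U (f c w))

noncomputable def nestedRight (f g : A → A → ℕ →₀ A) (V U : Module.End ℂ A) (x y w : A) : A :=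
  (g y w).sum fun r c => (V ^ r) (opEv U (f x c))

variable {f : A → A → ℕ →₀ A} (g : A → A → ℕ →₀ A)

lemma opEv_left_ev (hf : Bilin f) (U : Module.End ℂ A) (z : ℂ) (x y w : A) :
    opEv U (f (ev z (g x y)) w) = nestedLeft f g (z • 1) U x y w := by
  rw [ev, hf.finsuppSum_left, map_finsuppSum]
  exact Finsupp.sum_congr fun r _ => by rw [hf.2.1, map_smul, smul_one_pow_apply]

lemma opEv_right_ev (hf : Bilin f) (U : Module.End ℂ A) (z : ℂ) (x y w : A) :
    opEv U (f x (ev z (g y w))) = nestedRight f g (z • 1) U x y w := by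
  rw [ev, hf.finsuppSum_right, map_finsuppSum]
  exact Finsupp.sum_congr fun r _ => by rw [hf.2.2.2, map_smul, smul_one_pow_apply]

lemma IsSesquilinear.opEv_left_ev_substNeg (hf : IsSesquilinear D f) (U : Module.End ℂ A)
    (z : ℂ) (x y w : A) :
    opEv U (f (ev z (substNeg D (g x y))) w) = nestedLeft f g (U - z • 1) U x y w := by
  rw [ev_substNeg, opEv_apply (-(z • 1) - D), hf.bilin.finsuppSum_left, map_finsuppSum]
  exact Finsupp.sum_congr fun r _ => hf.opEv_pow_apply_left U z r _ w

lemma IsSesquilinear.opEv_right_ev_substNeg (hf : IsSesquilinear D f) {U : Module.End ℂ A}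
    (hU : Commute D U) (z : ℂ) (x y w : A) :
    opEv U (f x (ev z (substNeg D (g y w)))) = nestedRight f g (-(z • 1) - D - U) U x y w := by
  rw [ev_substNeg, opEv_apply (-(z • 1) - D), hf.bilin.finsuppSum_right, map_finsuppSum]
  exact Finsupp.sum_congr fun r _ => hf.opEv_pow_apply_right hU z r x _

end Nested

section SubAdjacent

variable {D : Module.End ℂ A}

/-- The sub-adjacent `λ`-bracket `a_λ b - b_{-∂-λ} a`. -/
noncomputable def subAdj (D : Module.End ℂ A) (f : A → A → ℕ →₀ A) (a b : A) : ℕ →₀ A :=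
  f a b - substNeg D (f b a)

variable {f : A → A → ℕ →₀ A}

lemma ev_subAdj_swap (l : ℂ) (a b : A) :
    ev l (subAdj D f a b) = -ev l (substNeg D (subAdj D f b a)) := by
  rw [subAdj, subAdj, substNeg_sub, ev_sub, ev_sub, ev_substNeg_substNeg, neg_sub]

lemma IsSesquilinear.subAdj (hf : IsSesquilinear D f) : IsSesquilinear D (subAdj D f) := by
  obtain ⟨h₁, h₂, h₃, h₄⟩ := hf.bilin
  refine ⟨⟨fun a a' b => ?_, fun r a b => ?_, fun a b b' => ?_, fun r a b => ?_⟩,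
    fun l a b => ?_, fun l a b => ?_⟩
  · simp only [LSCpaper.subAdj, h₁, h₃, substNeg_add]; abel
  · simp only [LSCpaper.subAdj, h₂, h₄, substNeg_smul, smul_sub]
  · simp only [LSCpaper.subAdj, h₃, h₁, substNeg_add]; abel
  · simp only [LSCpaper.subAdj, h₄, h₂, substNeg_smul, smul_sub]
  · rw [LSCpaper.subAdj, LSCpaper.subAdj, ev_sub, ev_sub, hf.sesq1, ev_substNeg, ev_substNeg,
      hf.opEv_apply_right (commute_neg_smul_one_sub D l)]
    simp only [LinearMap.sub_apply, LinearMap.neg_apply, LinearMap.smul_apply,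
      Module.End.one_apply]
    module
  · rw [LSCpaper.subAdj, LSCpaper.subAdj, ev_sub, ev_sub, hf.sesq2, ev_substNeg, ev_substNeg,
      hf.opEv_apply_left]
    simp only [LinearMap.sub_apply, LinearMap.neg_apply, LinearMap.smul_apply,
      Module.End.one_apply, map_sub]
    module

variable (g : A → A → ℕ →₀ A)

lemma ev_subAdj_ev_subAdj_right (hf : IsSesquilinear D f) (l m : ℂ) (a b c : A) :
    ev l (subAdj D f a (ev m (subAdj D g b c))) =
      (nestedRight f g (m • 1) (l • 1) a b c - nestedRight f g (-((l + m) • 1) - D) (l • 1) a c b)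
        - (nestedLeft f g (m • 1) (-(l • 1) - D) b c a
          - nestedLeft f g (-((l + m) • 1) - D) (-(l • 1) - D) c b a) := by
  rw [LSCpaper.subAdj, LSCpaper.subAdj, ev_sub, ev_sub, ev_substNeg l, ev_eq_opEv l,
    hf.bilin.sub_right, hf.bilin.sub_left, map_sub, map_sub, opEv_right_ev g hf.bilin,
    hf.opEv_right_ev_substNeg g (commute_smul_one D l), opEv_left_ev g hf.bilin,
    hf.opEv_left_ev_substNeg g]
  congr 3 <;> module

lemma ev_subAdj_ev_subAdj_left (hf : IsSesquilinear D f) (l m : ℂ) (a b c : A) :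
    ev (l + m) (subAdj D f (ev l (subAdj D g a b)) c) =
      (nestedLeft f g (l • 1) ((l + m) • 1) a b c - nestedLeft f g (m • 1) ((l + m) • 1) b a c)
        - (nestedRight f g (l • 1) (-((l + m) • 1) - D) c a b
          - nestedRight f g (m • 1) (-((l + m) • 1) - D) c b a) := by
  rw [LSCpaper.subAdj, LSCpaper.subAdj, ev_sub, ev_sub, ev_substNeg (l + m), ev_eq_opEv (l + m),
    hf.bilin.sub_right, hf.bilin.sub_left, map_sub, map_sub, opEv_left_ev g hf.bilin,
    hf.opEv_left_ev_substNeg g, opEv_right_ev g hf.bilin,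
    hf.opEv_right_ev_substNeg g (commute_neg_smul_one_sub D (l + m))]
  congr 3 <;> module

end SubAdjacent

section LeftSymmetry

variable {D : Module.End ℂ A} {ι : Type*} {s : Finset ι} {f g : ι → A → A → ℕ →₀ A}

/-- For `s = range (n + 1)`, `f = θ`, `g i = θ (n - i)` this is the degree-`n` component of the
left-symmetry of `θ_t`. -/
def AssocLeftSymm (s : Finset ι) (f g : ι → A → A → ℕ →₀ A) : Prop :=
  ∀ (l m : ℂ) (a b c : A),
    ∑ i ∈ s, (ev (l + m) (f i (ev l (g i a b)) c) - ev l (f i a (ev m (g i b c)))) =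
      ∑ i ∈ s, (ev (l + m) (f i (ev m (g i b a)) c) - ev m (f i b (ev l (g i a c))))

lemma AssocLeftSymm.nested (h : AssocLeftSymm s f g) (hf : ∀ i, Bilin (f i)) (x : ℂ)
    (W : Module.End ℂ A) (a b c : A) :
    ∑ i ∈ s, (nestedLeft (f i) (g i) (x • 1) (x • 1 + W) a b c
        - nestedRight (f i) (g i) W (x • 1) a b c) =
      ∑ i ∈ s, (nestedLeft (f i) (g i) W (x • 1 + W) b a c
        - nestedRight (f i) (g i) (x • 1) W b a c) := by
  rw [← sub_eq_zero, ← Finset.sum_sub_distrib]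
  apply eq_zero_of_mem_opPolyFun (T := W)
  · refine sum_mem_opPolyFun s fun i _ => ?_
    refine sub_mem (sub_mem ?_ ?_) (sub_mem ?_ ?_) <;>
      refine finsuppSum_mem_opPolyFun _ fun r q => ?_
    · simp only [smul_one_pow_apply]
      exact Submodule.smul_mem _ (x ^ r) (shift_mem_opPolyFun x _)
    · exact pow_apply_mem_opPolyFun (const_mem_opPolyFun _) r
    · exact pow_apply_mem_opPolyFun (shift_mem_opPolyFun x _) r
    · simp only [smul_one_pow_apply]
      exact Submodule.smul_mem _ (x ^ r) (opEv_mem_opPolyFun _)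
  · intro y
    simp only [← add_smul, ← opEv_left_ev _ (hf _), ← opEv_right_ev _ (hf _), ← ev_eq_opEv]
    rw [Finset.sum_sub_distrib, h x y a b c, sub_self]

theorem AssocLeftSymm.jacobi_subAdj (h : AssocLeftSymm s f g) (hf : ∀ i, IsSesquilinear D (f i))
    (l m : ℂ) (a b c : A) :
    ∑ i ∈ s, ev l (subAdj D (f i) a (ev m (subAdj D (g i) b c))) =
      ∑ i ∈ s, (ev (l + m) (subAdj D (f i) (ev l (subAdj D (g i) a b)) c)
        + ev m (subAdj D (f i) b (ev l (subAdj D (g i) a c)))) := by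
  have hb i := (hf i).bilin
  have J₁ := h.nested hb l (m • 1) a b c
  have J₂ := h.nested hb l (-((l + m) • 1) - D) a c b
  have J₃ := h.nested hb m (-((l + m) • 1) - D) b c a
  rw [← add_smul] at J₁
  rw [show l • 1 + (-((l + m) • 1) - D) = -(m • 1) - D by module] at J₂
  rw [show m • 1 + (-((l + m) • 1) - D) = -(l • 1) - D by module] at J₃
  simp only [ev_subAdj_ev_subAdj_right _ (hf _), ev_subAdj_ev_subAdj_left _ (hf _), add_comm m l,
    Finset.sum_sub_distrib, Finset.sum_add_distrib] at J₁ J₂ J₃ ⊢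
  linear_combination (norm := abel) J₂ - J₁ - J₃

end LeftSymmetry

/-- If `θ_t` is a formal `1`-parameter deformation of the
left-symmetric conformal algebra `A`, then
`(Θ_t)_λ(a, b) = (θ_t)_λ(a, b) - (θ_t)_{-∂-λ}(b, a)` is a formal
`1`-parameter deformation of the sub-adjacent Lie conformal algebra `g(A)`. -/
theorem formal_deformation_subadjacent
    (D : Module.End ℂ A) (θ : ℕ → A → A → ℕ →₀ A) (hθ : IsFormalDef D θ) :
    IsLieFormalDef D (fun i a b => θ i a b - substNeg D (θ i b a)) := by
  change IsLieFormalDef D fun i => subAdj D (θ i)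
  have hθi i : IsSesquilinear D (θ i) := ⟨hθ.bilin i, hθ.sesq1 i, hθ.sesq2 i⟩
  have hΘ i : IsSesquilinear D (subAdj D (θ i)) := (hθi i).subAdj
  have jacobi n := AssocLeftSymm.jacobi_subAdj (s := Finset.range (n + 1)) (g := fun i => θ (n - i))
    (hθ.deform n) hθi
  refine ⟨⟨(hΘ 0).bilin, (hΘ 0).sesq1, (hΘ 0).sesq2, ev_subAdj_swap, fun l m a b c => ?_⟩,
    fun i => (hΘ i).bilin, fun i => (hΘ i).sesq1, fun i => (hΘ i).sesq2,
    fun i => ev_subAdj_swap, jacobi⟩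
  simpa only [zero_add, Finset.sum_range_one] using jacobi 0 l m a b c

end LSCpaper
end
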